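/- Let ζ ∈ ℍ and define h : ℍ → ℝ by h(z) := 1 + |z−ζ|²/(2·Im(z)·Im(ζ)). Then for every z ∈ ℍ with z ≠ ζ one has 2i · conj( (1/2)(∂h/∂x + i ∂h/∂y)(z) ) = −2·((z−ζ̄)/(2√(Im ζ)))^{−2} · ( r_ζ(z)²/(1−r_ζ(z)²)² ) · X_ζ(z)^{−1}, where X_ζ(z) := (z−ζ)/(z−ζ̄) and r_ζ(z) := |X_ζ(z)|. -/

import Mathlib

/-!
Since `h` is real-valued, its real differential has the form `v ↦ Re (B v)` with `B = 2 ∂h/∂z`,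
and then `ξ₀ h = 2i ∂h/∂z = i B`. The quotient rule gives
`B = i conj(z - ζ) conj(z - ζ̄) / (2 (Im z)² Im ζ)`. On the other side,
`|z - ζ̄|² - |z - ζ|² = 4 Im z Im ζ` gives `1 - r_ζ(z)² = 4 Im z Im ζ / |z - ζ̄|²`, and both sides
reduce to `-conj(z - ζ) conj(z - ζ̄) / (2 (Im z)² Im ζ)`.
-/

open Complex

/-- `X_ζ(z) := (z−ζ)/(z−ζ̄)` elliptic coordinate. -/
noncomputable def Xell (ζ z : ℂ) : ℂ := (z - ζ) / (z - (starRingEnd ℂ) ζ)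

/-- `r_ζ(z) := |X_ζ(z)|`. -/
noncomputable def rell (ζ z : ℂ) : ℝ := ‖Xell ζ z‖

open ComplexConjugate

lemma two_I_mul_conj_half_eq_I_mul_of_eq_re_mul {L : ℂ →L[ℝ] ℂ} (B : ℂ)
    (hL : ∀ v, L v = ((B * v).re : ℂ)) :
    2 * I * conj ((1 / 2) * (L 1 + I * L I)) = I * B := by
  apply Complex.ext <;> simp [hL]

lemma hasFDerivAt_norm_sub_sq_div_im (ζ z : ℂ) (hz : z.im ≠ 0) (hζ : ζ.im ≠ 0) :
    HasFDerivAt (fun w : ℂ => ‖w - ζ‖ ^ 2 / (2 * w.im * ζ.im))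
      (reCLM ∘L ContinuousLinearMap.mul ℝ ℂ
        (I * conj (z - ζ) * conj (z - conj ζ) / (2 * z.im ^ 2 * ζ.im))) z := by
  have hnorm : HasFDerivAt (fun w : ℂ => ‖w - ζ‖ ^ 2)
      (2 • (innerSL ℝ (z - ζ)).comp (ContinuousLinearMap.id ℝ ℂ)) z :=
    ((hasFDerivAt_id z).sub_const ζ).norm_sq
  have hinv := (hasDerivAt_inv hz).comp_hasFDerivAt z imCLM.hasFDerivAt
  have hfun : (fun w : ℂ => ‖w - ζ‖ ^ 2 / (2 * w.im * ζ.im))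
      = fun w => ‖w - ζ‖ ^ 2 * (w.im)⁻¹ * (2 * ζ.im)⁻¹ := by
    funext w
    simp only [div_eq_mul_inv, mul_inv]
    ring
  rw [hfun]
  refine ((hnorm.mul hinv).mul_const (2 * ζ.im)⁻¹).congr_fderiv ?_
  ext v
  simp only [ContinuousLinearMap.comp_apply, ContinuousLinearMap.mul_apply', reCLM_apply,
    add_apply, smul_apply, coe_innerSL_apply, ContinuousLinearMap.comp_id, Function.comp_apply,
    imCLM_apply, Complex.inner, smul_eq_mul, nsmul_eq_mul, pow_two, norm_mul_self_eq_normSq,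
    normSq_apply, div_re, div_im, mul_re, mul_im, sub_re, sub_im, conj_re, conj_im, I_re, I_im,
    ofReal_re, ofReal_im, re_ofNat, im_ofNat]
  field_simp
  ring

lemma normSq_sub_conj_sub_normSq_sub (ζ z : ℂ) :
    normSq (z - conj ζ) - normSq (z - ζ) = 4 * z.im * ζ.im := by
  simp only [normSq_apply, sub_re, sub_im, conj_re, conj_im]
  ring

lemma sub_conj_ne_zero {ζ z : ℂ} (hz : 0 < z.im) (hζ : 0 < ζ.im) : z - conj ζ ≠ 0 := by
  intro h
  have him := congrArg im h
  simp only [sub_im, conj_im, sub_neg_eq_add, zero_im] at him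
  linarith

lemma rell_sq_div_one_sub_rell_sq_sq {ζ z : ℂ} (hz : 0 < z.im) (hζ : 0 < ζ.im) :
    rell ζ z ^ 2 / (1 - rell ζ z ^ 2) ^ 2
      = normSq (z - ζ) * normSq (z - conj ζ) / (4 * z.im * ζ.im) ^ 2 := by
  have hw : normSq (z - conj ζ) ≠ 0 := (normSq_pos.mpr (sub_conj_ne_zero hz hζ)).ne'
  have hr : rell ζ z ^ 2 = normSq (z - ζ) / normSq (z - conj ζ) := by
    rw [rell, Xell, norm_div, div_pow, ← normSq_eq_norm_sq, ← normSq_eq_norm_sq]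
  rw [hr, ← normSq_sub_conj_sub_normSq_sub]
  field_simp

lemma neg_two_mul_zpow_mul_rell_mul_Xell_inv {ζ z : ℂ} (hz : 0 < z.im) (hζ : 0 < ζ.im)
    (hne : z ≠ ζ) :
    -2 * ((z - conj ζ) / (2 * (Real.sqrt ζ.im : ℂ))) ^ (-2 : ℤ) *
        ((rell ζ z ^ 2 / (1 - rell ζ z ^ 2) ^ 2 : ℝ) : ℂ) * (Xell ζ z) ^ (-1 : ℤ)
      = -(conj (z - ζ) * conj (z - conj ζ)) / (2 * z.im ^ 2 * ζ.im) := by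
  have hu : z - ζ ≠ 0 := sub_ne_zero.mpr hne
  have hw := sub_conj_ne_zero hz hζ
  have hb : (ζ.im : ℂ) ≠ 0 := ofReal_ne_zero.mpr hζ.ne'
  have hsqrt : ((Real.sqrt ζ.im : ℝ) : ℂ) ^ 2 = ζ.im := by
    rw [← ofReal_pow, Real.sq_sqrt hζ.le]
  rw [rell_sq_div_one_sub_rell_sq_sq hz hζ, Xell, zpow_neg_one, inv_div, zpow_neg, zpow_two]
  push_cast
  rw [← mul_conj, ← mul_conj]
  field_simp
  rw [hsqrt]
  ring

/-- The computation (eqn:xicoshr): for `h(z) = 1 + |z−ζ|²/(2 Im z Im ζ)`,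
`ξ₀(h)(z) = −2((z−ζ̄)/(2√Im ζ))^{−2} (r_ζ(z)²/(1−r_ζ(z)²)²) X_ζ(z)^{−1}`, where
`ξ₀ = 2i conj((1/2)(∂/∂x + i ∂/∂y))`. -/
theorem xi_cosh_dist (ζ : ℂ) (hζ : 0 < ζ.im) (h : ℂ → ℂ)
    (hh : ∀ z : ℂ, h z = 1 + ((‖z - ζ‖ ^ 2 / (2 * z.im * ζ.im) : ℝ) : ℂ))
    (z : ℂ) (hz : 0 < z.im) (hne : z ≠ ζ) :
    2 * Complex.I *
        (starRingEnd ℂ) ((1 / 2) * (fderiv ℝ h z 1 + Complex.I * fderiv ℝ h z Complex.I)) =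
      -2 * ((z - (starRingEnd ℂ) ζ) / (2 * (Real.sqrt ζ.im : ℂ))) ^ (-2 : ℤ) *
        ((rell ζ z ^ 2 / (1 - rell ζ z ^ 2) ^ 2 : ℝ) : ℂ) * (Xell ζ z) ^ (-1 : ℤ) := by
  have hfderiv : fderiv ℝ h z = ofRealCLM ∘L reCLM ∘L ContinuousLinearMap.mul ℝ ℂ
      (I * conj (z - ζ) * conj (z - conj ζ) / (2 * z.im ^ 2 * ζ.im)) := by
    rw [show h = fun w => 1 + ofRealCLM (‖w - ζ‖ ^ 2 / (2 * w.im * ζ.im)) from funext hh]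
    exact ((ofRealCLM.hasFDerivAt.comp z
      (hasFDerivAt_norm_sub_sq_div_im ζ z hz.ne' hζ.ne')).const_add 1).fderiv
  rw [hfderiv, two_I_mul_conj_half_eq_I_mul_of_eq_re_mul _ fun v => rfl,
    neg_two_mul_zpow_mul_rell_mul_Xell_inv hz hζ hne]
  linear_combination conj (z - ζ) * conj (z - conj ζ) / (2 * z.im ^ 2 * ζ.im) * I_sq
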